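/- arXiv:1812.01400 — 2 statements merged into one kernel-verified Lean document; each statement's English description precedes it below -/
import Mathlib

section
/- Let ≻ be an acyclic relation on a finite set X, and suppose a choice function f with f(t) ∈ X_t satisfies: f(t) ≻ y for all y ∈ X_t ∖ {f(t)} implies no cycle through the union of these relations. Then there exists an injective utility function u : X → ℝ such that f(t) = argmax_{x ∈ X_t} u(x) for every t. (Any linear extension of the transitive closure of the revealed preference relation works.) -/
/-!
Acyclicity makes reverse reachability under the revealed preference relation a partial order.
By Szpilrajn's theorem it extends to a linear order, and on a finite set the rank of an element in
that linear order is an injective utility under which every chosen `f t` beats the rest of `X t`.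
-/

open Function Relation

theorem Finite.exists_strictMono_real {β : Type*} [LinearOrder β] [Finite β] :
    ∃ u : β → ℝ, StrictMono u := by
  cases nonempty_fintype β
  exact ⟨fun x => ((Fintype.orderIsoFinOfCardEq β rfl).symm x : ℕ),
    Nat.strictMono_cast.comp (Fin.val_strictMono.comp (OrderIso.strictMono _))⟩

theorem Finite.exists_strictMono_injective_real {α : Type*} [PartialOrder α] [Finite α] :
    ∃ u : α → ℝ, StrictMono u ∧ Injective u := by
  have : Finite (LinearExtension α) := ‹Finite α›
  obtain ⟨u, hu⟩ := Finite.exists_strictMono_real (β := LinearExtension α)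
  have hext : StrictMono (toLinearExtension : α → LinearExtension α) :=
    toLinearExtension.monotone.strictMono_of_injective injective_id
  exact ⟨u ∘ toLinearExtension, hu.comp hext, hu.injective.comp injective_id⟩

namespace Relation

variable {α : Type*}

abbrev acyclicPartialOrder (r : α → α → Prop) (h : ∀ x, ¬ TransGen r x x) : PartialOrder α where
  le a b := ReflTransGen r b a
  le_refl _ := ReflTransGen.refl
  le_trans _ _ _ hab hbc := hbc.trans hab
  le_antisymm a b hab hba := by
    rcases reflTransGen_iff_eq_or_transGen.mp hab with rfl | hab
    · rfl
    rcases reflTransGen_iff_eq_or_transGen.mp hba with rfl | hba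
    · rfl
    exact absurd (hab.trans hba) (h b)

theorem exists_injective_utility_of_acyclic [Finite α] {r : α → α → Prop}
    (h : ∀ x, ¬ TransGen r x x) :
    ∃ u : α → ℝ, Injective u ∧ ∀ x y, r x y → u y < u x := by
  let _ := acyclicPartialOrder r h
  obtain ⟨u, hu, hinj⟩ := Finite.exists_strictMono_injective_real (α := α)
  refine ⟨u, hinj, fun x y hxy => hu (lt_of_le_of_ne (ReflTransGen.single hxy) ?_)⟩
  rintro rfl
  exact h y (TransGen.single hxy)

end Relation

/-- If the revealed preference relation of a choice function is acyclic, then the choice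
function is rationalized by some injective utility function. -/
theorem acyclic_implies_rationalizable
    {T : ℕ} {α : Type*} [Fintype α]
    (X : Fin T → Finset α) (f : Fin T → α) (hf : ∀ t, f t ∈ X t)
    (hacyc : ∀ x, ¬ Relation.TransGen
        (fun x y => ∃ t, x = f t ∧ y ∈ X t ∧ y ≠ x) x x) :
    ∃ u : α → ℝ, Function.Injective u ∧
      ∀ t, f t ∈ X t ∧ ∀ y ∈ X t, y ≠ f t → u y < u (f t) := by
  obtain ⟨u, hinj, hu⟩ := exists_injective_utility_of_acyclic hacyc
  exact ⟨u, hinj, fun t => ⟨hf t, fun y hy hne => hu _ _ ⟨t, rfl, hy, hne⟩⟩⟩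
end

section
/- Let ≽ and ≻ ⊆ ≽ be relations on a finite set P such that there is no ≽-cycle containing a ≻-link. Then there exists a function v : P → ℝ such that a ≽ b implies v(a) ≥ v(b) and a ≻ b implies v(a) > v(b). -/
/-- If there is no `≽`-cycle containing a strict link, then there is a real-valued
representation respecting `≽` weakly and `≻` strictly. -/
theorem no_strict_cycle_representation
    {P : Type*} [Fintype P] (W S : P → P → Prop)
    (hsub : ∀ a b, S a b → W a b)
    (hnocycle : ∀ a, ¬ ∃ c d, Relation.ReflTransGen W a c ∧ S c d ∧
        Relation.ReflTransGen W d a) :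
    ∃ v : P → ℝ, (∀ a b, W a b → v b ≤ v a) ∧ (∀ a b, S a b → v b < v a) := by
  classical
  refine ⟨fun a => ((Finset.univ.filter (fun b => Relation.ReflTransGen W a b)).card : ℝ),
    ?_, ?_⟩
  · intro a b hW
    have : Finset.univ.filter (fun x => Relation.ReflTransGen W b x) ⊆
        Finset.univ.filter (fun x => Relation.ReflTransGen W a x) := by
      intro x hx
      simp only [Finset.mem_filter, Finset.mem_univ, true_and] at *
      exact Relation.ReflTransGen.trans (Relation.ReflTransGen.single hW) hx
    exact Nat.cast_le.mpr (Finset.card_le_card this)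
  · intro a b hS
    have hsb : Finset.univ.filter (fun x => Relation.ReflTransGen W b x) ⊆
        Finset.univ.filter (fun x => Relation.ReflTransGen W a x) := by
      intro x hx
      simp only [Finset.mem_filter, Finset.mem_univ, true_and] at *
      exact Relation.ReflTransGen.trans (Relation.ReflTransGen.single (hsub a b hS)) hx
    have hss : Finset.univ.filter (fun x => Relation.ReflTransGen W b x) ⊂
        Finset.univ.filter (fun x => Relation.ReflTransGen W a x) := by
      refine ⟨hsb, fun h => ?_⟩
      have ha : a ∈ Finset.univ.filter (fun x => Relation.ReflTransGen W a x) := by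
        simp [Relation.ReflTransGen.refl]
      have := h ha
      simp only [Finset.mem_filter, Finset.mem_univ, true_and] at this
      exact hnocycle a ⟨a, b, Relation.ReflTransGen.refl, hS, this⟩
    exact Nat.cast_lt.mpr (Finset.card_lt_card hss)
end
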